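/- Let a, b be coprime positive integers and n a positive integer, let u be the step sequence of an (a,b)-Dyck path P of size n, and let u' be either (case Q = P_1) u' := u, or (case Q = P_0) u' := u_0 − u, where u_0(k) := ⌊b(k−1)/a⌋ is the step sequence of the lowest path P_0; in both cases a·u'_t ≤ b(t−1) for all t. Define v_1, …, v_b entrywise from w := a·u' by v_1 := ⌈w/b⌉ and v_i := ⌈(w − (v_1 + … + v_{i−1}))/(b−i+1)⌉ for 2 ≤ i ≤ b. For each 1 ≤ i ≤ b define a permutation w_i of {1,…,an} by: start with S = {1,…,an}, and for t = an, an−1, …, 1, let w_i(t) be the (v_i(t)+1)-th smallest element of S and remove it from S. Let w'_i be the inverse permutation of w_i, and define the sequence μ of length abn by μ_{b(p−1)+q} := w'_q(p) for 1 ≤ p ≤ an and 1 ≤ q ≤ b. Then: (1) μ is a b-Stirling permutation of size an; and (2) μ = ζ(a·u'), the multi-permutation obtained by the block-insertion map applied to the sequence a·u'. -/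

import Mathlib

/-- `zeta b s N` : block-insertion map producing a multi-permutation. -/
def zeta (b : ℕ) (s : ℕ → ℕ) : ℕ → List ℕ
  | 0 => []
  | n + 1 =>
      (zeta b s n).take (s (n + 1)) ++ List.replicate b (n + 1) ++
        (zeta b s n).drop (s (n + 1))

/-- `π` is a `b`-Stirling permutation of size `N`. -/
def IsStirling (b N : ℕ) (π : List ℕ) : Prop :=
  π.length = b * N ∧
  (∀ v, 1 ≤ v → v ≤ N → π.count v = b) ∧
  (∀ v, v ∈ π → 1 ≤ v ∧ v ≤ N) ∧
  ∀ p q r : Fin π.length, p < q → q < r → π.get p = π.get r → π.get p ≤ π.get q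

/-- `Spartial b w i = v 1 + ⋯ + v i` for the greedy ceiling decomposition
`v 1 = ⌈w/b⌉`, `v i = ⌈(w - (v 1 + ⋯ + v (i-1)))/(b-i+1)⌉`. -/
def Spartial (b w : ℕ) : ℕ → ℕ
  | 0 => 0
  | k + 1 => Spartial b w k + (w - Spartial b w k + (b - k) - 1) / (b - k)

/-- `vval b w i = v i` of the greedy ceiling decomposition of `w` into `b`
parts. -/
def vval (b w i : ℕ) : ℕ := Spartial b w i - Spartial b w (i - 1)

/-- `remSet N v k` : the set `S ⊆ {1,…,N}` remaining after the first `k`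
selections of the algorithm which, for `t = N, N-1, …`, selects and removes the
`(v t + 1)`-th smallest element of `S`. -/
def remSet (N : ℕ) (v : ℕ → ℕ) : ℕ → Finset ℕ
  | 0 => Finset.Icc 1 N
  | k + 1 => (remSet N v k).erase
      (((remSet N v k).sort (· ≤ ·)).getD (v (N - k)) 0)

/-- `wperm N v t` : the permutation value `w(t)`, the `(v t + 1)`-th smallest
element of the set remaining when `t` is processed (processing order
`t = N, N-1, …, 1`). -/
def wperm (N : ℕ) (v : ℕ → ℕ) (t : ℕ) : ℕ :=
  ((remSet N v (N - t)).sort (· ≤ ·)).getD (v t) 0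

/-- `winv N v p` : the inverse permutation, the (unique) `t ∈ [1,N]` with
`wperm N v t = p`. -/
noncomputable def winv (N : ℕ) (v : ℕ → ℕ) (p : ℕ) : ℕ :=
  sInf {t | 1 ≤ t ∧ t ≤ N ∧ wperm N v t = p}

/-- the multi-permutation `μ` of length `b*N` defined by
`μ (b*(p-1)+q) = w'_q(p)`, where `w'_q` is the inverse of the permutation
`w_q` built from the sequences `v q = vval b (a * u' ·) q`. -/
noncomputable def muList (a b N : ℕ) (u' : ℕ → ℕ) : List ℕ :=
  (List.range (b * N)).map (fun idx =>
    winv N (fun t => vval b (a * u' t) (idx % b + 1)) (idx / b + 1))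

/-!
For each `q`, the selection algorithm for `N` first picks `w_q(N) = v_q(N) + 1` from `{1, …, N}`
and then runs the algorithm for `N - 1` on what is left, i.e. composed with the increasing
bijection `ℕ → ℕ ∖ {v_q(N) + 1}`. So the word `w'_q(1) ⋯ w'_q(N)` arises from the one for `N - 1`
by inserting `N` at position `v_q(N)`. The greedy ceiling decomposition of `s = a·u'_N` is
`v_q(N) = ⌊(s + b - q) / b⌋`, so the (0-based) entry `b p + q - 1` of `μ`, which is `w'_q(p + 1)`,
precedes position `s` exactly when `p < v_q(N)`. Hence inserting `N` into every word is inserting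
a block of `b` copies of `N` at position `s` into `μ`, which is the recursion defining `ζ`. That
`ζ` produces Stirling permutations follows by the same induction, since a block of a new largest
value creates no pattern `212`.
-/

def succAbove (e : ℕ) : ℕ ↪o ℕ :=
  OrderEmbedding.ofStrictMono (fun x => if x < e then x else x + 1) fun x y h => by
    dsimp only
    split_ifs <;> omega

lemma succAbove_apply (e x : ℕ) : succAbove e x = if x < e then x else x + 1 := rfl

lemma succAbove_ne (e x : ℕ) : succAbove e x ≠ e := by
  rw [succAbove_apply]
  split_ifs <;> omega

lemma getD_map_succAbove {e : ℕ} (he : 0 < e) (l : List ℕ) (n : ℕ) :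
    (l.map (succAbove e)).getD n 0 = succAbove e (l.getD n 0) := by
  simpa [succAbove_apply, he] using List.getD_map l 0 (n := n) (succAbove e)

lemma Icc_erase_eq_map_succAbove {N e : ℕ} (he : e ∈ Finset.Icc 1 (N + 1)) :
    (Finset.Icc 1 (N + 1)).erase e = (Finset.Icc 1 N).map (succAbove e).toEmbedding := by
  rw [Finset.mem_Icc] at he
  ext x
  simp only [Finset.mem_erase, Finset.mem_Icc, Finset.mem_map, RelEmbedding.coe_toEmbedding,
    succAbove_apply]
  constructor
  · rintro ⟨hne, h1, h2⟩
    rcases lt_or_gt_of_ne hne with h | h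
    · exact ⟨x, by omega, if_pos h⟩
    · exact ⟨x - 1, by omega, by rw [if_neg (by omega)]; omega⟩
  · rintro ⟨y, hy, rfl⟩
    split_ifs <;> omega

lemma sort_Icc_one (N : ℕ) : (Finset.Icc 1 N).sort (· ≤ ·) = List.range' 1 N := by
  rw [← (List.toFinset_sort (r := (· ≤ ·)) List.nodup_range').mpr List.pairwise_le_range']
  congr 1
  ext x
  simp only [Finset.mem_Icc, List.mem_toFinset, List.mem_range'_1]
  omega

lemma sort_map_succAbove (e : ℕ) (s : Finset ℕ) :
    (s.map (succAbove e).toEmbedding).sort (· ≤ ·) = (s.sort (· ≤ ·)).map (succAbove e) :=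
  ((succAbove e).strictMono.strictMonoOn _).map_finsetSort.symm

section Selection

variable {N : ℕ} {v : ℕ → ℕ}

lemma remSet_succ_succ (hv : v (N + 1) ≤ N) (k : ℕ) :
    remSet (N + 1) v (k + 1) = (remSet N v k).map (succAbove (v (N + 1) + 1)).toEmbedding := by
  induction k with
  | zero =>
    rw [remSet, remSet, remSet, sort_Icc_one, Nat.sub_zero,
      List.getD_eq_getElem _ _ (by simpa using Nat.lt_succ_of_le hv), List.getElem_range',
      show 1 + 1 * v (N + 1) = v (N + 1) + 1 by omega]
    exact Icc_erase_eq_map_succAbove (Finset.mem_Icc.mpr ⟨by omega, by omega⟩)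
  | succ k ih =>
    rw [remSet, ih, sort_map_succAbove, Nat.add_sub_add_right,
      getD_map_succAbove (Nat.succ_pos _)]
    exact (Finset.map_erase _ _ _).symm

lemma wperm_self (hv : v N < N) : wperm N v N = v N + 1 := by
  rw [wperm, Nat.sub_self, remSet, sort_Icc_one, List.getD_eq_getElem _ _ (by simpa),
    List.getElem_range']
  omega

lemma wperm_succ_of_le (hv : v (N + 1) ≤ N) {t : ℕ} (ht : t ≤ N) :
    wperm (N + 1) v t = succAbove (v (N + 1) + 1) (wperm N v t) := by
  rw [wperm, Nat.sub_add_comm ht, remSet_succ_succ hv, sort_map_succAbove,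
    getD_map_succAbove (Nat.succ_pos _)]
  rfl

lemma wperm_bijOn (hv : ∀ t, 1 ≤ t → t ≤ N → v t < t) :
    Set.BijOn (wperm N v) (Finset.Icc 1 N) (Finset.Icc 1 N) := by
  induction N with
  | zero => simp
  | succ N ih =>
    have hvN : v (N + 1) ≤ N := Nat.lt_succ_iff.mp (hv _ le_add_self le_rfl)
    set e := v (N + 1) + 1
    have hlow : Set.BijOn (wperm (N + 1) v) (Finset.Icc 1 N)
        ((Finset.Icc 1 N).map (succAbove e).toEmbedding) := by
      rw [Finset.coe_map]
      refine ((succAbove e).injective.injOn.bijOn_image.comp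
        (ih fun t h1 h2 => hv t h1 (by omega))).congr fun t ht => ?_
      exact (wperm_succ_of_le hvN (Finset.mem_coe.mp ht |> Finset.mem_Icc.mp).2).symm
    have he : e ∈ Finset.Icc 1 (N + 1) := Finset.mem_Icc.mpr ⟨by omega, by omega⟩
    have htop : wperm (N + 1) v (N + 1) = e := wperm_self (Nat.lt_succ_of_le hvN)
    have := hlow.insert (a := N + 1) (by
      rw [htop, Finset.mem_coe, Finset.mem_map]
      rintro ⟨x, -, hx⟩
      exact succAbove_ne e x hx)
    rwa [htop, ← Icc_erase_eq_map_succAbove he, ← Finset.coe_insert, ← Finset.coe_insert,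
      Finset.insert_erase he, Finset.insert_Icc_right_eq_Icc_add_one (by omega)] at this

lemma winv_wperm (hv : ∀ t, 1 ≤ t → t ≤ N → v t < t) {t : ℕ} (ht : t ∈ Finset.Icc 1 N) :
    winv N v (wperm N v t) = t := by
  have hfiber : {t' | 1 ≤ t' ∧ t' ≤ N ∧ wperm N v t' = wperm N v t} = {t} := by
    ext t'
    constructor
    · rintro ⟨h1, h2, h⟩
      exact (wperm_bijOn hv).injOn (by simp [h1, h2]) ht h
    · rintro rfl
      exact ⟨(Finset.mem_Icc.mp ht).1, (Finset.mem_Icc.mp ht).2, rfl⟩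
  rw [winv, hfiber, csInf_singleton]

lemma winv_self (hv : ∀ t, 1 ≤ t → t ≤ N → v t < t) (hN : 1 ≤ N) : winv N v (v N + 1) = N := by
  rw [← wperm_self (hv N hN le_rfl), winv_wperm hv (Finset.mem_Icc.mpr ⟨hN, le_rfl⟩)]

lemma winv_succ_succAbove (hv : ∀ t, 1 ≤ t → t ≤ N + 1 → v t < t) {p : ℕ}
    (hp : p ∈ Finset.Icc 1 N) :
    winv (N + 1) v (succAbove (v (N + 1) + 1) p) = winv N v p := by
  have hv' : ∀ t, 1 ≤ t → t ≤ N → v t < t := fun t h1 h2 => hv t h1 (by omega)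
  obtain ⟨t, ht, rfl⟩ := (wperm_bijOn hv').surjOn hp
  rw [Finset.mem_coe, Finset.mem_Icc] at ht
  rw [← wperm_succ_of_le (Nat.lt_succ_iff.mp (hv _ le_add_self le_rfl)) ht.2,
    winv_wperm hv (Finset.mem_Icc.mpr ⟨ht.1, by omega⟩), winv_wperm hv' (Finset.mem_Icc.mpr ht)]

end Selection

lemma Spartial_eq {b m r : ℕ} (hr : r < b) {k : ℕ} (hk : k ≤ b) :
    Spartial b (b * m + r) k = k * m + min k r := by
  induction k with
  | zero => simp [Spartial]
  | succ k ih =>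
    rw [Spartial, ih (by omega), Nat.succ_mul]
    have hd : 0 < b - k := by omega
    have hbm : b * m = k * m + (b - k) * m := by rw [← Nat.add_mul]; congr 1; omega
    rcases le_or_gt r k with h | h
    · rw [min_eq_right h, min_eq_right (by omega : r ≤ k + 1),
        show b * m + r - (k * m + r) + (b - k) - 1 = (b - k) * m + (b - k - 1) by omega,
        Nat.mul_add_div hd, Nat.div_eq_of_lt (by omega)]
      omega
    · rw [min_eq_left h.le, min_eq_left (by omega : k + 1 ≤ r),
        show b * m + r - (k * m + k) + (b - k) - 1 = (b - k) * m + (r - k + (b - k) - 1) by omega,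
        Nat.mul_add_div hd, Nat.div_eq_of_lt_le (k := 1) (by omega) (by omega)]
      omega

lemma vval_eq_div {b w q : ℕ} (hq : 1 ≤ q) (hqb : q ≤ b) : vval b w q = (w + b - q) / b := by
  have hb : 0 < b := by omega
  obtain ⟨m, r, hr, rfl⟩ : ∃ m r, r < b ∧ w = b * m + r :=
    ⟨w / b, w % b, Nat.mod_lt w hb, (Nat.div_add_mod w b).symm⟩
  rw [vval, Spartial_eq hr hqb, Spartial_eq hr (by omega),
    show b * m + r + b - q = (r + b - q) + b * m by omega, Nat.add_mul_div_left _ _ hb]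
  obtain ⟨q, rfl⟩ : ∃ q', q = q' + 1 := ⟨q - 1, by omega⟩
  rcases le_or_gt r q with h | h
  · rw [Nat.div_eq_of_lt (by omega), Nat.add_sub_cancel, Nat.succ_mul]
    omega
  · rw [Nat.div_eq_of_lt_le (k := 1) (by omega) (by omega), Nat.add_sub_cancel, Nat.succ_mul]
    omega

lemma vval_lt {b w q t : ℕ} (hq : 1 ≤ q) (hqb : q ≤ b) (ht : 1 ≤ t) (hw : w ≤ b * (t - 1)) :
    vval b w q < t := by
  rw [vval_eq_div hq hqb, Nat.div_lt_iff_lt_mul (by omega)]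
  have : b * t = b * (t - 1) + b := by rw [← Nat.mul_succ]; congr 1; omega
  rw [Nat.mul_comm]
  omega

lemma lt_iff_div_lt_vval {b : ℕ} (hb : 0 < b) (w i : ℕ) :
    i < w ↔ i / b < vval b w (i % b + 1) := by
  have := Nat.mod_lt i hb
  have := Nat.div_add_mod i b
  have : (i / b + 1) * b = b * (i / b) + b := by ring
  rw [vval_eq_div (by omega) (by omega), ← Nat.add_one_le_iff (n := i / b), Nat.le_div_iff_mul_le hb]
  omega

lemma lt_add_iff_div_le_vval {b : ℕ} (hb : 0 < b) (w i : ℕ) :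
    i < w + b ↔ i / b ≤ vval b w (i % b + 1) := by
  have := Nat.mod_lt i hb
  rw [lt_iff_div_lt_vval hb, vval_eq_div (by omega) (by omega), vval_eq_div (by omega) (by omega),
    show w + b + b - (i % b + 1) = w + b - (i % b + 1) + b by omega, Nat.add_div_right _ hb,
    Nat.lt_succ_iff]

lemma getD_take_append_replicate_append_drop {α : Type*} {l : List α} {w : ℕ}
    (hw : w ≤ l.length) (b : ℕ) (x d : α) (i : ℕ) :
    (l.take w ++ List.replicate b x ++ l.drop w).getD i d =
      if i < w then l.getD i d else if i < w + b then x else l.getD (i - b) d := by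
  simp only [List.getD_eq_getElem?_getD, List.getElem?_append, List.getElem?_take,
    List.getElem?_replicate, List.getElem?_drop, List.length_append, List.length_take,
    List.length_replicate, min_eq_left hw]
  split_ifs <;> first | rfl | (congr 2; omega)

def Avoids212 (l : List ℕ) : Prop :=
  ∀ i j k, i < j → j < k → k < l.length → l.getD i 0 = l.getD k 0 → l.getD i 0 ≤ l.getD j 0

lemma Avoids212.get_le {l : List ℕ} (h : Avoids212 l) {i j k : Fin l.length} (hij : i < j)
    (hjk : j < k) (heq : l.get i = l.get k) : l.get i ≤ l.get j := by
  simpa [List.getD_eq_getElem] using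
    h i j k hij hjk k.isLt (by simpa [List.getD_eq_getElem] using heq)

lemma Avoids212.take_append_replicate_append_drop {l : List ℕ} (hl : Avoids212 l) {M : ℕ}
    (hM : ∀ x ∈ l, x < M) (w b : ℕ) :
    Avoids212 (l.take w ++ List.replicate b M ++ l.drop w) := by
  rw [List.take_eq_take_min, List.drop_eq_drop_min]
  have hw : min w l.length ≤ l.length := min_le_right _ _
  set w := min w l.length
  have hlt : ∀ j, j < l.length → l.getD j 0 < M := fun j hj => by
    rw [List.getD_eq_getElem _ _ hj]
    exact hM _ (List.getElem_mem hj)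
  intro i j k hij hjk hk heq
  simp only [List.length_append, List.length_take, List.length_drop, List.length_replicate,
    min_eq_left hw] at hk
  simp only [getD_take_append_replicate_append_drop hw] at heq ⊢
  -- cases on which indices fall in the block: only they carry the value `M`
  split_ifs at heq ⊢ <;>
    first
    | exact hl _ _ _ (by omega) (by omega) (by omega) heq
    | exact (hlt i (by omega)).le
    | exact absurd heq (hlt i (by omega)).ne
    | exact absurd heq (hlt (k - b) (by omega)).ne'
    | exact absurd heq (hlt (i - b) (by omega)).ne
    | omega

lemma length_zeta (b : ℕ) (s : ℕ → ℕ) (N : ℕ) : (zeta b s N).length = b * N := by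
  induction N with
  | zero => rfl
  | succ N ih =>
    simp only [zeta, List.length_append, List.length_take, List.length_replicate,
      List.length_drop, ih]
    rw [Nat.mul_succ]
    omega

lemma mem_zeta {b : ℕ} {s : ℕ → ℕ} {N x : ℕ} (hx : x ∈ zeta b s N) : 1 ≤ x ∧ x ≤ N := by
  induction N with
  | zero => cases hx
  | succ N ih =>
    simp only [zeta, List.mem_append] at hx
    rcases hx with (hx | hx) | hx
    · exact (ih (List.mem_of_mem_take hx)).imp_right Nat.le_succ_of_le
    · exact (List.eq_of_mem_replicate hx).symm ▸ ⟨by omega, le_rfl⟩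
    · exact (ih (List.mem_of_mem_drop hx)).imp_right Nat.le_succ_of_le

lemma count_zeta (b : ℕ) (s : ℕ → ℕ) {N x : ℕ} (hx1 : 1 ≤ x) (hxN : x ≤ N) :
    (zeta b s N).count x = b := by
  induction N with
  | zero => omega
  | succ N ih =>
    have hsplit := congrArg (List.count x) (List.take_append_drop (s (N + 1)) (zeta b s N))
    rw [List.count_append] at hsplit
    simp only [zeta, List.count_append, List.count_replicate, beq_iff_eq]
    rcases Nat.lt_or_ge x (N + 1) with h | h
    · rw [if_neg (by omega)]
      have := ih (by omega)
      omega
    · obtain rfl : x = N + 1 := by omega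
      have : (zeta b s N).count (N + 1) = 0 :=
        List.count_eq_zero.mpr fun hmem => by have := mem_zeta hmem; omega
      rw [if_pos rfl]
      omega

lemma avoids212_zeta (b : ℕ) (s : ℕ → ℕ) (N : ℕ) : Avoids212 (zeta b s N) := by
  induction N with
  | zero => intro i j k _ _ hk; simp [zeta] at hk
  | succ N ih =>
    exact ih.take_append_replicate_append_drop (fun x hx => Nat.lt_succ_of_le (mem_zeta hx).2) _ _

lemma isStirling_zeta (b : ℕ) (s : ℕ → ℕ) (N : ℕ) : IsStirling b N (zeta b s N) :=
  ⟨length_zeta b s N, fun _ => count_zeta b s, fun _ => mem_zeta,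
    fun _ _ _ => (avoids212_zeta b s N).get_le⟩

lemma length_muList (a b N : ℕ) (u' : ℕ → ℕ) : (muList a b N u').length = b * N := by
  simp [muList]

lemma getD_muList {a b N : ℕ} {u' : ℕ → ℕ} {i : ℕ} (hi : i < b * N) :
    (muList a b N u').getD i 0 =
      winv N (fun t => vval b (a * u' t) (i % b + 1)) (i / b + 1) := by
  simp [muList, hi]

lemma muList_eq_zeta {a b N : ℕ} {u' : ℕ → ℕ}
    (hu' : ∀ t, 1 ≤ t → t ≤ N → a * u' t ≤ b * (t - 1)) :
    muList a b N u' = zeta b (fun t => a * u' t) N := by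
  induction N with
  | zero => simp [muList, zeta]
  | succ N ih =>
    have hw : a * u' (N + 1) ≤ b * N := hu' (N + 1) le_add_self le_rfl
    rw [zeta, ← ih fun t h1 h2 => hu' t h1 (by omega)]
    refine List.ext_getElem (by simp [length_muList, Nat.mul_succ]; omega) fun i hi _ => ?_
    rw [length_muList] at hi
    have hb : 0 < b := Nat.pos_of_ne_zero (by rintro rfl; simp at hi)
    have hv : ∀ t, 1 ≤ t → t ≤ N + 1 → vval b (a * u' t) (i % b + 1) < t := fun t h1 h2 =>
      vval_lt (by omega) (Nat.mod_lt i hb) h1 (hu' t h1 h2)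
    have hlow := lt_iff_div_lt_vval hb (a * u' (N + 1)) i
    have hhigh := lt_add_iff_div_le_vval hb (a * u' (N + 1)) i
    have htop := hv (N + 1) le_add_self le_rfl
    have hdiv : i / b < N + 1 := Nat.div_lt_of_lt_mul hi
    rw [← List.getD_eq_getElem _ 0, ← List.getD_eq_getElem _ 0, getD_muList hi,
      getD_take_append_replicate_append_drop (by rw [length_muList]; exact hw)]
    split_ifs with hbefore hblock
    · have := hlow.mp hbefore
      rw [getD_muList (by omega),
        ← winv_succ_succAbove hv (p := i / b + 1) (Finset.mem_Icc.mpr ⟨le_add_self, by omega⟩),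
        succAbove_apply, if_pos (by omega)]
    · rw [show i / b + 1 = vval b (a * u' (N + 1)) (i % b + 1) + 1 by
          have := hlow.not.mp hbefore; have := hhigh.mp hblock; omega,
        winv_self hv (by omega)]
    · have := hhigh.not.mp hblock
      obtain ⟨j, rfl⟩ : ∃ j, i = j + b := ⟨i - b, by omega⟩
      rw [Nat.add_sub_cancel, Nat.add_mod_right, Nat.add_div_right _ hb] at *
      rw [getD_muList (by rw [Nat.mul_succ] at hi; omega),
        ← winv_succ_succAbove hv (p := j / b + 1) (Finset.mem_Icc.mpr ⟨le_add_self, by omega⟩),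
        succAbove_apply, if_neg (by omega)]

theorem mu_is_stirling_and_zeta_general (a b n : ℕ)
    (u' : ℕ → ℕ)
    (hu'bound : ∀ t, 1 ≤ t → t ≤ a * n → a * u' t ≤ b * (t - 1)) :
    IsStirling b (a * n) (muList a b (a * n) u') ∧
    muList a b (a * n) u' = zeta b (fun t => a * u' t) (a * n) := by
  have hμ := muList_eq_zeta hu'bound
  exact ⟨hμ ▸ isStirling_zeta b _ _, hμ⟩

/-- for an (a,b)-Dyck path with step sequence `u` and with
`u'` either `u` (case `Q = P₁`) or `u₀ - u` where `u₀ k = ⌊b(k-1)/a⌋` is the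
step sequence of the lowest path (case `Q = P₀`), the multi-permutation `μ`
built from the greedy ceiling decompositions `v i` of `a·u'` via the selection
algorithm is (1) a `b`-Stirling permutation of size `a*n`, and (2) equal to
`ζ(a·u')`. -/
theorem mu_is_stirling_and_zeta (a b n : ℕ)
    (ha : 0 < a) (hb : 0 < b) (hn : 0 < n) (hab : Nat.Coprime a b)
    (u u' : ℕ → ℕ)
    (humono : ∀ k l, 1 ≤ k → k ≤ l → l ≤ a * n → u k ≤ u l)
    (hubound : ∀ k, 1 ≤ k → k ≤ a * n → a * u k ≤ b * (k - 1))
    (hcase : (∀ t, 1 ≤ t → t ≤ a * n → u' t = u t) ∨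
             (∀ t, 1 ≤ t → t ≤ a * n → u' t = b * (t - 1) / a - u t))
    (hu'bound : ∀ t, 1 ≤ t → t ≤ a * n → a * u' t ≤ b * (t - 1)) :
    IsStirling b (a * n) (muList a b (a * n) u') ∧
    muList a b (a * n) u' = zeta b (fun t => a * u' t) (a * n) :=
  mu_is_stirling_and_zeta_general a b n u' hu'bound
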